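/- Let n ≥ 1, H ≥ 1, T ≥ 1, and let c = (c_{ij}), l = (l_{ij}) be nonnegative. For t = 1,…,T and k = 1,…,H let d_{tk} ∈ ℝ_{≥0}^n and P_{tk} ∈ [0,1]^{n×n} with ∑_{j=1}^n P_{tk,ij} ≤ 1 for all i, and with ∑_{j=1}^n P_{tH,ij} = 1 for all i. For y ∈ Δ_{n−1} define the within-period trajectory x_{t1}(y) = y, γ_{t1}(y) = 0, and for k = 1,…,H: x_{t(k+1)}(y) = (x_{tk}(y) − d_{tk})^+ + P_{tk}ᵀ( min(x_{tk}(y), d_{tk}) + γ_{tk}(y) ) and γ_{t(k+1)}(y)_i = ( min(x_{tk}(y)_i, d_{tk,i}) + γ_{tk}(y)_i ) · (1 − ∑_{j=1}^n P_{tk,ij}); write Φ_t(y) := x_{t(H+1)}(y). Define the modified period-t cost with entering inventory x and target level y as C̃_t(x, y) = M_c(y − x) − ∑_{k=1}^H ∑_{i,j=1}^n l_{ij} P_{tk,ij} min( x_{tk}(y)_i, d_{tk,i} ). Let x₁ ∈ Δ_{n−1}, set y₀ := x₁, let y₁,…,y_T ∈ Δ_{n−1}, and define x_{t+1} := Φ_t(y_t)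 for t = 1,…,T. Then | ∑_{t=1}^T C̃_t(x_t, y_t) − ∑_{t=1}^T C̃_t(x_{t+1}, y_t) | ≤ 2 · (max_{i,j} c_{ij}) · ( 1 + ∑_{t=1}^T ‖y_t − y_{t−1}‖₁ ). -/
import Mathlib


/-- The repositioning cost `M_c(v)`: the minimum-cost network flow achieving net change `v`. -/
noncomputable def repoCost {n : ℕ} (c : Fin n → Fin n → ℝ) (v : Fin n → ℝ) : ℝ :=
  sInf {r : ℝ | ∃ ξ : Fin n → Fin n → ℝ, (∀ i j, 0 ≤ ξ i j) ∧
    (∀ j, (∑ i, ξ i j) - (∑ k, ξ j k) = v j) ∧ r = ∑ i, ∑ j, c i j * ξ i j}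

/-- The ℓ¹ norm on `ℝ^n`. -/
def l1Norm {n : ℕ} (v : Fin n → ℝ) : ℝ := ∑ i, |v i|

/-- Within-period trajectory of the extended (multi-subperiod) model.
`subTraj d P y k = (x_{t(k+1)}, γ_{t(k+1)})` in paper indexing, where subperiod `k+1` of the
paper corresponds to index `k` here; `subTraj d P y 0 = (y, 0)` is the start of the period. -/
noncomputable def subTraj {n : ℕ} (d : ℕ → Fin n → ℝ) (P : ℕ → Fin n → Fin n → ℝ)
    (y : Fin n → ℝ) : ℕ → (Fin n → ℝ) × (Fin n → ℝ)
  | 0 => (y, fun _ => 0)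
  | k + 1 =>
    (fun i => max ((subTraj d P y k).1 i - d k i) 0
        + ∑ j, P k j i * (min ((subTraj d P y k).1 j) (d k j) + (subTraj d P y k).2 j),
     fun i => (min ((subTraj d P y k).1 i) (d k i) + (subTraj d P y k).2 i)
        * (1 - ∑ j, P k i j))

/-- The modified period cost of the extended model with entering inventory `x`,
target level `y`, and `H` subperiods. -/
noncomputable def CtildeExt {n : ℕ} (c l : Fin n → Fin n → ℝ) (H : ℕ)
    (d : ℕ → Fin n → ℝ) (P : ℕ → Fin n → Fin n → ℝ) (x y : Fin n → ℝ) : ℝ :=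
  repoCost c (fun i => y i - x i)
    - ∑ k ∈ Finset.range H, ∑ i, ∑ j,
        l i j * P k i j * min ((subTraj d P y k).1 i) (d k i)

open Finset

lemma maxSubAddMin (a b : ℝ) : max (a - b) 0 + min a b = a := by
  rcases le_total a b with h | h
  · rw [max_eq_right (by linarith), min_eq_left h]; ring
  · rw [max_eq_left (by linarith), min_eq_right h]; ring

lemma maxDecomp (a : ℝ) : max a 0 - max (-a) 0 = a := by
  rcases le_total a 0 with h | h
  · rw [max_eq_right h, max_eq_left (neg_nonneg.mpr h)]; ring
  · rw [max_eq_left h, max_eq_right (neg_nonpos.mpr h)]; ring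

lemma repoCost_bddBelow {n : ℕ} (c : Fin n → Fin n → ℝ) (hc : ∀ i j, 0 ≤ c i j) (v : Fin n → ℝ) :
    BddBelow {r : ℝ | ∃ ξ : Fin n → Fin n → ℝ, (∀ i j, 0 ≤ ξ i j) ∧
      (∀ j, (∑ i, ξ i j) - (∑ k, ξ j k) = v j) ∧ r = ∑ i, ∑ j, c i j * ξ i j} := by
  refine ⟨0, ?_⟩
  rintro r ⟨ξ, hξ, -, rfl⟩
  exact sum_nonneg fun i _ => sum_nonneg fun j _ => mul_nonneg (hc i j) (hξ i j)

lemma repoCost_nonneg {n : ℕ} (c : Fin n → Fin n → ℝ) (hc : ∀ i j, 0 ≤ c i j)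
    (v : Fin n → ℝ) : 0 ≤ repoCost c v := by
  apply Real.sInf_nonneg
  rintro r ⟨ξ, hξ, -, rfl⟩
  exact sum_nonneg fun i _ => sum_nonneg fun j _ => mul_nonneg (hc i j) (hξ i j)

lemma repo_feasible {n : ℕ} (c : Fin n → Fin n → ℝ) (hc : ∀ i j, 0 ≤ c i j)
    (cmax : ℝ) (hcm : ∀ i j, c i j ≤ cmax) (hcm0 : 0 ≤ cmax)
    (v : Fin n → ℝ) (hv : ∑ i, v i = 0) :
    ∃ ξ : Fin n → Fin n → ℝ, (∀ i j, 0 ≤ ξ i j) ∧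
      (∀ j, (∑ i, ξ i j) - (∑ k, ξ j k) = v j) ∧
      (∑ i, ∑ j, c i j * ξ i j) ≤ cmax * l1Norm v := by
  have hl1 : 0 ≤ l1Norm v := sum_nonneg fun i _ => abs_nonneg _
  set Sp := ∑ i, max (v i) 0 with hSpdef
  have hSp0 : 0 ≤ Sp := sum_nonneg fun i _ => le_max_right _ _
  have hSm : ∑ i, max (-v i) 0 = Sp := by
    have h : Sp - ∑ i, max (-v i) 0 = 0 := by
      rw [hSpdef, ← Finset.sum_sub_distrib]
      simp_rw [maxDecomp]; exact hv
    linarith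
  rcases eq_or_lt_of_le hSp0 with h0 | hpos
  · -- Sp = 0, so v = 0
    have hvle : ∀ i, v i ≤ 0 := by
      intro i
      have := (Finset.sum_eq_zero_iff_of_nonneg (fun i _ => le_max_right (v i) 0)).mp h0.symm i (mem_univ i)
      have : max (v i) 0 = 0 := this
      nlinarith [le_max_left (v i) (0:ℝ)]
    have hvge : ∀ i, 0 ≤ v i := by
      intro i
      have h0' : ∑ i, max (-v i) 0 = 0 := by rw [hSm, ← h0]
      have := (Finset.sum_eq_zero_iff_of_nonneg (fun i _ => le_max_right (-v i) 0)).mp h0' i (mem_univ i)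
      nlinarith [le_max_left (-v i) (0:ℝ)]
    refine ⟨fun _ _ => 0, fun _ _ => le_refl 0, ?_, ?_⟩
    · intro j; simp; linarith [hvle j, hvge j]
    · simp; positivity
  · -- Sp > 0
    refine ⟨fun i j => max (-v i) 0 * (max (v j) 0 / Sp), ?_, ?_, ?_⟩
    · intro i j
      exact mul_nonneg (le_max_right _ _) (div_nonneg (le_max_right _ _) hSp0)
    · intro j
      have h1 : ∑ i, max (-v i) 0 * (max (v j) 0 / Sp) = max (v j) 0 := by
        rw [← Finset.sum_mul, hSm, mul_div_cancel₀ _ (ne_of_gt hpos)]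
      have h2 : ∑ k, max (-v j) 0 * (max (v k) 0 / Sp) = max (-v j) 0 := by
        rw [← Finset.mul_sum, ← Finset.sum_div, ← hSpdef, div_self (ne_of_gt hpos), mul_one]
      rw [h1, h2, maxDecomp]
    · have hcost : ∑ i, ∑ j, c i j * (max (-v i) 0 * (max (v j) 0 / Sp))
          ≤ ∑ i, ∑ j, cmax * (max (-v i) 0 * (max (v j) 0 / Sp)) := by
        refine sum_le_sum fun i _ => sum_le_sum fun j _ => ?_
        exact mul_le_mul_of_nonneg_right (hcm i j)
          (mul_nonneg (le_max_right _ _) (div_nonneg (le_max_right _ _) hSp0))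
      have htot : ∑ i, ∑ j, cmax * (max (-v i) 0 * (max (v j) 0 / Sp)) = cmax * Sp := by
        have inner : ∀ i : Fin n, ∑ j, cmax * (max (-v i) 0 * (max (v j) 0 / Sp))
            = cmax * max (-v i) 0 := by
          intro i
          rw [← Finset.mul_sum, ← Finset.mul_sum, ← Finset.sum_div, ← hSpdef,
            div_self (ne_of_gt hpos), mul_one]
        rw [Finset.sum_congr rfl fun i _ => inner i, ← Finset.mul_sum, hSm]
      have hle : Sp ≤ l1Norm v := by
        refine sum_le_sum fun i _ => ?_
        exact max_le (le_abs_self _) (abs_nonneg _)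
      calc ∑ i, ∑ j, c i j * (max (-v i) 0 * (max (v j) 0 / Sp))
          ≤ cmax * Sp := by rw [← htot]; exact hcost
        _ ≤ cmax * l1Norm v := mul_le_mul_of_nonneg_left hle hcm0

lemma repoCost_le {n : ℕ} (c : Fin n → Fin n → ℝ) (hc : ∀ i j, 0 ≤ c i j)
    (cmax : ℝ) (hcm : ∀ i j, c i j ≤ cmax) (hcm0 : 0 ≤ cmax)
    (v : Fin n → ℝ) (hv : ∑ i, v i = 0) : repoCost c v ≤ cmax * l1Norm v := by
  obtain ⟨ξ, h1, h2, h3⟩ := repo_feasible c hc cmax hcm hcm0 v hv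
  exact le_trans (csInf_le (repoCost_bddBelow c hc v) ⟨ξ, h1, h2, rfl⟩) h3

lemma repoCost_lip {n : ℕ} (c : Fin n → Fin n → ℝ) (hc : ∀ i j, 0 ≤ c i j)
    (cmax : ℝ) (hcm : ∀ i j, c i j ≤ cmax) (hcm0 : 0 ≤ cmax)
    (a b : Fin n → ℝ) (ha : ∑ i, a i = 0) (hb : ∑ i, b i = 0) :
    repoCost c a ≤ repoCost c b + cmax * l1Norm (fun i => a i - b i) := by
  have hab : ∑ i, (a i - b i) = 0 := by rw [Finset.sum_sub_distrib, ha, hb]; ring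
  obtain ⟨η, hη1, hη2, hη3⟩ := repo_feasible c hc cmax hcm hcm0 (fun i => a i - b i) hab
  obtain ⟨ζ, hζ1, hζ2, _⟩ := repo_feasible c hc cmax hcm hcm0 b hb
  have hne : {r : ℝ | ∃ ξ : Fin n → Fin n → ℝ, (∀ i j, 0 ≤ ξ i j) ∧
      (∀ j, (∑ i, ξ i j) - (∑ k, ξ j k) = b j) ∧ r = ∑ i, ∑ j, c i j * ξ i j}.Nonempty :=
    ⟨_, ζ, hζ1, hζ2, rfl⟩
  have key : repoCost c a - cmax * l1Norm (fun i => a i - b i) ≤ repoCost c b := by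
    refine le_csInf hne ?_
    rintro r ⟨ξ, hξ1, hξ2, rfl⟩
    have hfeas : repoCost c a ≤ (∑ i, ∑ j, c i j * ξ i j) + ∑ i, ∑ j, c i j * η i j := by
      refine csInf_le (repoCost_bddBelow c hc a) ⟨fun i j => ξ i j + η i j, ?_, ?_, ?_⟩
      · intro i j; exact add_nonneg (hξ1 i j) (hη1 i j)
      · intro j
        have := hξ2 j; have := hη2 j
        simp only [Finset.sum_add_distrib]
        linarith
      · rw [← Finset.sum_add_distrib]
        refine Finset.sum_congr rfl fun i _ => ?_
        rw [← Finset.sum_add_distrib]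
        exact Finset.sum_congr rfl fun j _ => by ring
    linarith
  linarith

lemma repoCost_abs {n : ℕ} (c : Fin n → Fin n → ℝ) (hc : ∀ i j, 0 ≤ c i j)
    (cmax : ℝ) (hcm : ∀ i j, c i j ≤ cmax) (hcm0 : 0 ≤ cmax)
    (a b : Fin n → ℝ) (ha : ∑ i, a i = 0) (hb : ∑ i, b i = 0) :
    |repoCost c a - repoCost c b| ≤ cmax * l1Norm (fun i => a i - b i) := by
  have h1 := repoCost_lip c hc cmax hcm hcm0 a b ha hb
  have h2 := repoCost_lip c hc cmax hcm hcm0 b a hb ha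
  have heq : l1Norm (fun i => b i - a i) = l1Norm (fun i => a i - b i) := by
    unfold l1Norm; exact Finset.sum_congr rfl fun i _ => abs_sub_comm _ _
  rw [heq] at h2
  rw [abs_le]; constructor <;> linarith

lemma subTraj_invariant {n : ℕ} (d : ℕ → Fin n → ℝ) (P : ℕ → Fin n → Fin n → ℝ)
    (y : Fin n → ℝ) : ∀ k,
    (∑ i, (subTraj d P y k).1 i) + (∑ i, (subTraj d P y k).2 i) = ∑ i, y i := by
  intro k; induction k with
  | zero => simp [subTraj]
  | succ k ih =>
    have h1 : ∑ i, ∑ j, P k j i * (min ((subTraj d P y k).1 j) (d k j) + (subTraj d P y k).2 j)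
        = ∑ i, (min ((subTraj d P y k).1 i) (d k i) + (subTraj d P y k).2 i) * (∑ j, P k i j) := by
      rw [Finset.sum_comm]
      exact Finset.sum_congr rfl fun i _ => by rw [← Finset.sum_mul, mul_comm]
    have h2 : ∑ i, max ((subTraj d P y k).1 i - d k i) 0 + ∑ i, min ((subTraj d P y k).1 i) (d k i)
        = ∑ i, (subTraj d P y k).1 i := by
      rw [← Finset.sum_add_distrib]
      exact Finset.sum_congr rfl fun i _ => maxSubAddMin _ _
    show (∑ i, (max ((subTraj d P y k).1 i - d k i) 0
        + ∑ j, P k j i * (min ((subTraj d P y k).1 j) (d k j) + (subTraj d P y k).2 j)))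
      + (∑ i, (min ((subTraj d P y k).1 i) (d k i) + (subTraj d P y k).2 i) * (1 - ∑ j, P k i j))
      = ∑ i, y i
    have h3 : ∀ i : Fin n, (min ((subTraj d P y k).1 i) (d k i) + (subTraj d P y k).2 i)
        * (1 - ∑ j, P k i j)
        = (min ((subTraj d P y k).1 i) (d k i) + (subTraj d P y k).2 i)
          - (min ((subTraj d P y k).1 i) (d k i) + (subTraj d P y k).2 i) * (∑ j, P k i j) :=
      fun i => by ring
    rw [Finset.sum_add_distrib, h1, Finset.sum_congr rfl fun i _ => h3 i,
      Finset.sum_sub_distrib, Finset.sum_add_distrib]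
    linarith [h2, ih]

lemma subTraj_nonneg {n : ℕ} (d : ℕ → Fin n → ℝ) (P : ℕ → Fin n → Fin n → ℝ)
    (y : Fin n → ℝ) (K : ℕ)
    (hd : ∀ k, k < K → ∀ i, 0 ≤ d k i) (hP : ∀ k, k < K → ∀ i j, 0 ≤ P k i j)
    (hPs : ∀ k, k < K → ∀ i, (∑ j, P k i j) ≤ 1) (hy : ∀ i, 0 ≤ y i) :
    ∀ k, k ≤ K → (∀ i, 0 ≤ (subTraj d P y k).1 i) ∧ (∀ i, 0 ≤ (subTraj d P y k).2 i) := by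
  intro k; induction k with
  | zero => intro _; exact ⟨hy, fun i => le_refl 0⟩
  | succ k ih =>
    intro hk
    have hk' : k < K := hk
    obtain ⟨hx, hg⟩ := ih (le_of_lt hk')
    constructor
    · intro i
      show 0 ≤ max ((subTraj d P y k).1 i - d k i) 0
        + ∑ j, P k j i * (min ((subTraj d P y k).1 j) (d k j) + (subTraj d P y k).2 j)
      refine add_nonneg (le_max_right _ _) (Finset.sum_nonneg fun j _ => ?_)
      exact mul_nonneg (hP k hk' j i) (add_nonneg (le_min (hx j) (hd k hk' j)) (hg j))
    · intro i
      show 0 ≤ (min ((subTraj d P y k).1 i) (d k i) + (subTraj d P y k).2 i) * (1 - ∑ j, P k i j)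
      exact mul_nonneg (add_nonneg (le_min (hx i) (hd k hk' i)) (hg i))
        (by linarith [hPs k hk' i])

lemma subTraj_final_sum {n : ℕ} (d : ℕ → Fin n → ℝ) (P : ℕ → Fin n → Fin n → ℝ)
    (y : Fin n → ℝ) (H : ℕ) (hH : 1 ≤ H)
    (hPlast : ∀ i, (∑ j, P (H - 1) i j) = 1) :
    ∑ i, (subTraj d P y H).1 i = ∑ i, y i := by
  obtain ⟨m, rfl⟩ : ∃ m, H = m + 1 := ⟨H - 1, (Nat.succ_pred_eq_of_pos hH).symm⟩
  have hm : (m + 1 : ℕ) - 1 = m := by omega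
  rw [hm] at hPlast
  have hg : ∀ i, (subTraj d P y (m+1)).2 i = 0 := by
    intro i
    show (min ((subTraj d P y m).1 i) (d m i) + (subTraj d P y m).2 i) * (1 - ∑ j, P m i j) = 0
    rw [hPlast i]; ring
  have hinv := subTraj_invariant d P y (m+1)
  rw [Finset.sum_eq_zero fun i _ => hg i, add_zero] at hinv
  exact hinv
theorem stmt12 (n H T : ℕ) (hn : 1 ≤ n) (hH : 1 ≤ H) (hT : 1 ≤ T)
    (c l : Fin n → Fin n → ℝ)
    (hc : ∀ i j, 0 ≤ c i j) (hl : ∀ i j, 0 ≤ l i j)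
    (cmax : ℝ) (hcmax : IsGreatest {x : ℝ | ∃ i j, x = c i j} cmax)
    (d : ℕ → ℕ → Fin n → ℝ) (P : ℕ → ℕ → Fin n → Fin n → ℝ)
    (hd : ∀ t k, 1 ≤ t → t ≤ T → k < H → ∀ i, 0 ≤ d t k i)
    (hPrange : ∀ t k, 1 ≤ t → t ≤ T → k < H → ∀ i j, 0 ≤ P t k i j ∧ P t k i j ≤ 1)
    (hPsub : ∀ t k, 1 ≤ t → t ≤ T → k < H → ∀ i, (∑ j, P t k i j) ≤ 1)
    (hPlast : ∀ t, 1 ≤ t → t ≤ T → ∀ i, (∑ j, P t (H - 1) i j) = 1)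
    (x y : ℕ → Fin n → ℝ)
    (hx1 : x 1 ∈ stdSimplex ℝ (Fin n))
    (hy0 : y 0 = x 1)
    (hy : ∀ t, 1 ≤ t → t ≤ T → y t ∈ stdSimplex ℝ (Fin n))
    (hxr : ∀ t, 1 ≤ t → t ≤ T → x (t + 1) = (subTraj (d t) (P t) (y t) H).1) :
    |(∑ t ∈ Finset.Icc 1 T, CtildeExt c l H (d t) (P t) (x t) (y t))
      - ∑ t ∈ Finset.Icc 1 T, CtildeExt c l H (d t) (P t) (x (t + 1)) (y t)|
      ≤ 2 * cmax * (1 + ∑ t ∈ Finset.Icc 1 T, l1Norm (fun i => y t i - y (t - 1) i)) := by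

  classical
  -- basic facts about cmax
  have hcm : ∀ i j, c i j ≤ cmax := fun i j => hcmax.2 ⟨i, j, rfl⟩
  have hcm0 : 0 ≤ cmax := by
    obtain ⟨i, j, hij⟩ := hcmax.1
    rw [hij]; exact hc i j
  -- sums of inventories
  have hsumy : ∀ t, 1 ≤ t → t ≤ T → ∑ i, y t i = 1 := fun t h1 h2 => (hy t h1 h2).2
  have hsumx' : ∀ t, 1 ≤ t → t ≤ T → ∑ i, x (t + 1) i = 1 := by
    intro t h1 h2
    rw [hxr t h1 h2, subTraj_final_sum _ _ _ H hH (hPlast t h1 h2), hsumy t h1 h2]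
  have hsumx : ∀ t, 1 ≤ t → t ≤ T → ∑ i, x t i = 1 := by
    intro t h1 h2
    rcases Nat.lt_or_ge t 2 with h | h
    · have : t = 1 := by omega
      rw [this]; exact hx1.2
    · obtain ⟨s, rfl⟩ : ∃ s, t = s + 1 := ⟨t - 1, by omega⟩
      exact hsumx' s (by omega) (by omega)
  -- the A/B decomposition
  set A : ℕ → ℝ := fun t => repoCost c (fun i => y t i - x t i) with hA
  set B : ℕ → ℝ := fun t => repoCost c (fun i => y t i - x (t + 1) i) with hB
  have hgoal1 : (∑ t ∈ Finset.Icc 1 T, CtildeExt c l H (d t) (P t) (x t) (y t))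
      - ∑ t ∈ Finset.Icc 1 T, CtildeExt c l H (d t) (P t) (x (t + 1)) (y t)
      = ∑ t ∈ Finset.Icc 1 T, (A t - B t) := by
    rw [← Finset.sum_sub_distrib]
    refine Finset.sum_congr rfl fun t _ => ?_
    simp only [CtildeExt, hA, hB]; ring
  rw [hgoal1]
  -- split off endpoints and reindex
  have hins : Finset.Icc 1 T = insert 1 (Finset.Icc 2 T) := by
    ext a; simp only [Finset.mem_Icc, Finset.mem_insert]; omega
  have hnotmem1 : (1 : ℕ) ∉ Finset.Icc 2 T := by simp
  have hinsT : Finset.Icc 1 T = insert T (Finset.Icc 1 (T - 1)) := by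
    ext a; simp only [Finset.mem_Icc, Finset.mem_insert]; omega
  have hnotmemT : T ∉ Finset.Icc 1 (T - 1) := by
    simp only [Finset.mem_Icc]; omega
  have hmap : Finset.Icc 2 T = Finset.map (addRightEmbedding 1) (Finset.Icc 1 (T - 1)) := by
    rw [Finset.map_add_right_Icc]; congr 1; omega
  have hBsum : ∑ t ∈ Finset.Icc 2 T, B (t - 1) = ∑ t ∈ Finset.Icc 1 (T - 1), B t := by
    rw [hmap, Finset.sum_map]
    exact Finset.sum_congr rfl fun t _ => by simp [addRightEmbedding]
  have hsplit : ∑ t ∈ Finset.Icc 1 T, (A t - B t)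
      = (A 1 - B T) + ∑ t ∈ Finset.Icc 2 T, (A t - B (t - 1)) := by
    rw [Finset.sum_sub_distrib, Finset.sum_sub_distrib, hBsum]
    have e1 : ∑ t ∈ Finset.Icc 1 T, A t = A 1 + ∑ t ∈ Finset.Icc 2 T, A t := by
      rw [hins, Finset.sum_insert hnotmem1]
    have e2 : ∑ t ∈ Finset.Icc 1 T, B t = B T + ∑ t ∈ Finset.Icc 1 (T - 1), B t := by
      rw [hinsT, Finset.sum_insert hnotmemT]
    rw [e1, e2]; ring
  rw [hsplit]
  -- bounds on each piece
  have hA1 : |A 1| ≤ cmax * l1Norm (fun i => y 1 i - y 0 i) := by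
    have harg : (fun i => y 1 i - x 1 i) = fun i => y 1 i - y 0 i := by
      funext i; rw [hy0]
    have hsum0 : ∑ i, (y 1 i - x 1 i) = 0 := by
      rw [Finset.sum_sub_distrib, hsumy 1 le_rfl hT, hx1.2]; ring
    rw [hA]
    rw [abs_of_nonneg (repoCost_nonneg c hc _), harg]
    rw [← harg]
    exact repoCost_le c hc cmax hcm hcm0 _ hsum0
  have hmid : ∀ t ∈ Finset.Icc 2 T, |A t - B (t - 1)|
      ≤ cmax * l1Norm (fun i => y t i - y (t - 1) i) := by
    intro t ht
    simp only [Finset.mem_Icc] at ht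
    have ht1 : t - 1 + 1 = t := by omega
    have hBt : B (t - 1) = repoCost c (fun i => y (t - 1) i - x t i) := by
      rw [hB]; simp only; rw [ht1]
    have hsa : ∑ i, (y t i - x t i) = 0 := by
      rw [Finset.sum_sub_distrib, hsumy t (by omega) ht.2, hsumx t (by omega) ht.2]; ring
    have hsb : ∑ i, (y (t - 1) i - x t i) = 0 := by
      rw [Finset.sum_sub_distrib, hsumy (t - 1) (by omega) (by omega),
        hsumx t (by omega) ht.2]; ring
    have habs := repoCost_abs c hc cmax hcm hcm0
      (fun i => y t i - x t i) (fun i => y (t - 1) i - x t i) hsa hsb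
    have harg : (fun i => (y t i - x t i) - (y (t - 1) i - x t i))
        = fun i => y t i - y (t - 1) i := by funext i; ring
    rw [harg] at habs
    rw [hA, hBt]
    exact habs
  have hxT1 : ∀ i, 0 ≤ x (T + 1) i := by
    intro i
    rw [hxr T hT le_rfl]
    exact ((subTraj_nonneg (d T) (P T) (y T) H
      (fun k hk => hd T k hT le_rfl hk)
      (fun k hk i j => (hPrange T k hT le_rfl hk i j).1)
      (fun k hk => hPsub T k hT le_rfl hk)
      (hy T hT le_rfl).1) H le_rfl).1 i
  have hBT : |B T| ≤ 2 * cmax := by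
    have hsum0 : ∑ i, (y T i - x (T + 1) i) = 0 := by
      rw [Finset.sum_sub_distrib, hsumy T hT le_rfl, hsumx' T hT le_rfl]; ring
    have hl2 : l1Norm (fun i => y T i - x (T + 1) i) ≤ 2 := by
      have : ∑ i, |y T i - x (T + 1) i| ≤ ∑ i, (y T i + x (T + 1) i) := by
        refine Finset.sum_le_sum fun i _ => ?_
        have h1 := (hy T hT le_rfl).1 i
        have h2 := hxT1 i
        rw [abs_le]; constructor <;> linarith
      have h3 : ∑ i, (y T i + x (T + 1) i) = 2 := by
        rw [Finset.sum_add_distrib, hsumy T hT le_rfl, hsumx' T hT le_rfl]; norm_num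
      calc l1Norm (fun i => y T i - x (T + 1) i) ≤ ∑ i, (y T i + x (T + 1) i) := this
        _ = 2 := h3
    rw [hB, abs_of_nonneg (repoCost_nonneg c hc _)]
    calc repoCost c (fun i => y T i - x (T + 1) i)
        ≤ cmax * l1Norm (fun i => y T i - x (T + 1) i) :=
          repoCost_le c hc cmax hcm hcm0 _ hsum0
      _ ≤ cmax * 2 := mul_le_mul_of_nonneg_left hl2 hcm0
      _ = 2 * cmax := by ring
  -- assemble
  have hDnn : ∀ t, 0 ≤ l1Norm (fun i => y t i - y (t - 1) i) :=
    fun t => Finset.sum_nonneg fun i _ => abs_nonneg _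
  have htri : |(A 1 - B T) + ∑ t ∈ Finset.Icc 2 T, (A t - B (t - 1))|
      ≤ |A 1| + |B T| + ∑ t ∈ Finset.Icc 2 T, |A t - B (t - 1)| := by
    calc |(A 1 - B T) + ∑ t ∈ Finset.Icc 2 T, (A t - B (t - 1))|
        ≤ |A 1 - B T| + |∑ t ∈ Finset.Icc 2 T, (A t - B (t - 1))| := abs_add_le _ _
      _ ≤ (|A 1| + |B T|) + ∑ t ∈ Finset.Icc 2 T, |A t - B (t - 1)| :=
          add_le_add (abs_sub _ _) (Finset.abs_sum_le_sum_abs _ _)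
  have hmidsum : ∑ t ∈ Finset.Icc 2 T, |A t - B (t - 1)|
      ≤ cmax * ∑ t ∈ Finset.Icc 2 T, l1Norm (fun i => y t i - y (t - 1) i) := by
    rw [Finset.mul_sum]
    exact Finset.sum_le_sum hmid
  have hDsplit : ∑ t ∈ Finset.Icc 1 T, l1Norm (fun i => y t i - y (t - 1) i)
      = l1Norm (fun i => y 1 i - y 0 i)
        + ∑ t ∈ Finset.Icc 2 T, l1Norm (fun i => y t i - y (t - 1) i) := by
    rw [hins, Finset.sum_insert hnotmem1]
  have hDsum_nn : 0 ≤ ∑ t ∈ Finset.Icc 1 T, l1Norm (fun i => y t i - y (t - 1) i) :=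
    Finset.sum_nonneg fun t _ => hDnn t
  calc |(A 1 - B T) + ∑ t ∈ Finset.Icc 2 T, (A t - B (t - 1))|
      ≤ |A 1| + |B T| + ∑ t ∈ Finset.Icc 2 T, |A t - B (t - 1)| := htri
    _ ≤ cmax * l1Norm (fun i => y 1 i - y 0 i) + 2 * cmax
        + cmax * ∑ t ∈ Finset.Icc 2 T, l1Norm (fun i => y t i - y (t - 1) i) := by
        exact add_le_add (add_le_add hA1 hBT) hmidsum
    _ = 2 * cmax + cmax * ∑ t ∈ Finset.Icc 1 T, l1Norm (fun i => y t i - y (t - 1) i) := by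
        rw [hDsplit]; ring
    _ ≤ 2 * cmax * (1 + ∑ t ∈ Finset.Icc 1 T, l1Norm (fun i => y t i - y (t - 1) i)) := by
        nlinarith [hDsum_nn, hcm0]
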